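/- arXiv:2605.09547 — 5 statements merged into one kernel-verified Lean document; each statement's English description precedes it below -/
import Mathlib

section
/- Let G be a directed acyclic graph on n vertices whose edge set is totally ordered by a topological order. Suppose every directed cut of the form (first k vertices, remaining vertices) in the topological order has at most F crossing edges. Then the total number of edges of G is at most 2n√F (assuming F ≥ 1). -/
/-!
Fix a block length `s = ⌊√F⌋ + 1`. An edge of length less than `s` is determined by its tail and
its length, so there are at most `n (s - 1) ≤ n √F` of them. An edge of length at least `s`
crosses a cut at a multiple of `s`, and there are at most `n / s` such cuts, each crossed by at
most `F` edges, giving at most `n F / s ≤ n √F` long edges.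
-/

namespace TopologicalEdges

variable {n : ℕ} {E : Finset (Fin n × Fin n)}

theorem card_filter_length_le (htopo : ∀ e ∈ E, e.1 < e.2) (d : ℕ) :
    (E.filter fun e => (e.2 : ℕ) - e.1 ≤ d).card ≤ n * d := by
  have hmaps : ∀ e ∈ E.filter (fun e => (e.2 : ℕ) - e.1 ≤ d),
      ((e.1 : ℕ), (e.2 : ℕ) - e.1 - 1) ∈ Finset.range n ×ˢ Finset.range d := by
    intro e he
    rw [Finset.mem_filter] at he
    have := htopo e he.1
    simp only [Finset.mem_product, Finset.mem_range]
    omega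
  have hinj : Set.InjOn (fun e : Fin n × Fin n => ((e.1 : ℕ), (e.2 : ℕ) - e.1 - 1))
      (E.filter fun e => (e.2 : ℕ) - e.1 ≤ d) := by
    intro a ha b hb hab
    have ha' := htopo a (Finset.mem_filter.1 ha).1
    have hb' := htopo b (Finset.mem_filter.1 hb).1
    simp only [Prod.mk.injEq] at hab
    ext <;> omega
  simpa using Finset.card_le_card_of_injOn _ hmaps hinj

theorem card_filter_length_gt_le {F : ℕ}
    (hcut : ∀ k : ℕ, (E.filter (fun e => (e.1 : ℕ) < k ∧ k ≤ (e.2 : ℕ))).card ≤ F) (d : ℕ) :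
    (E.filter fun e => d < (e.2 : ℕ) - e.1).card ≤ n / (d + 1) * F := by
  have hcover : E.filter (fun e => d < (e.2 : ℕ) - e.1) ⊆ (Finset.Icc 1 (n / (d + 1))).biUnion
      fun j => E.filter fun e => (e.1 : ℕ) < j * (d + 1) ∧ j * (d + 1) ≤ e.2 := by
    intro e he
    obtain ⟨heE, hlong⟩ := Finset.mem_filter.1 he
    have hdm := Nat.div_add_mod (e.2 : ℕ) (d + 1)
    have hmod : (e.2 : ℕ) % (d + 1) < d + 1 := Nat.mod_lt _ d.succ_pos
    have hj : (e.2 : ℕ) / (d + 1) ≤ n / (d + 1) := Nat.div_le_div_right e.2.isLt.le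
    have hj1 : 1 ≤ (e.2 : ℕ) / (d + 1) := (Nat.one_le_div_iff d.succ_pos).2 (by omega)
    simp only [Finset.mem_biUnion, Finset.mem_Icc, Finset.mem_filter]
    exact ⟨(e.2 : ℕ) / (d + 1), ⟨hj1, hj⟩, heE, by rw [mul_comm]; omega,
      by rw [mul_comm]; omega⟩
  calc _ ≤ _ := Finset.card_le_card hcover
    _ ≤ (Finset.Icc 1 (n / (d + 1))).card * F :=
      Finset.card_biUnion_le_card_mul _ _ _ fun j _ => hcut _
    _ = n / (d + 1) * F := by rw [Nat.card_Icc, Nat.add_sub_cancel]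

theorem card_le_mul_add_div_mul (htopo : ∀ e ∈ E, e.1 < e.2) {F : ℕ}
    (hcut : ∀ k : ℕ, (E.filter (fun e => (e.1 : ℕ) < k ∧ k ≤ (e.2 : ℕ))).card ≤ F) (d : ℕ) :
    E.card ≤ n * d + n / (d + 1) * F := by
  rw [← Finset.card_filter_add_card_filter_not (fun e : Fin n × Fin n => (e.2 : ℕ) - e.1 ≤ d)]
  simp only [not_le]
  exact add_le_add (card_filter_length_le htopo d) (card_filter_length_gt_le hcut d)

end TopologicalEdges

theorem mul_natSqrt_add_div_mul_le (n F : ℕ) :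
    (n : ℝ) * Nat.sqrt F + ((n / (Nat.sqrt F + 1) : ℕ) : ℝ) * F ≤ 2 * n * Real.sqrt F := by
  have hsqrt_le : (Nat.sqrt F : ℝ) ≤ √F := Real.nat_sqrt_le_real_sqrt
  have hsqrt_lt : √(F : ℝ) < Nat.sqrt F + 1 := Real.real_sqrt_lt_nat_sqrt_succ
  have hdiv : ((n / (Nat.sqrt F + 1) : ℕ) : ℝ) ≤ n / (Nat.sqrt F + 1) := by
    exact_mod_cast Nat.cast_div_le
  have hF : (F : ℝ) / (Nat.sqrt F + 1) ≤ √F := by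
    rw [div_le_iff₀ (by positivity)]
    calc (F : ℝ) = √F * √F := (Real.mul_self_sqrt (Nat.cast_nonneg F)).symm
      _ ≤ √F * (Nat.sqrt F + 1) := by gcongr
  calc (n : ℝ) * Nat.sqrt F + ((n / (Nat.sqrt F + 1) : ℕ) : ℝ) * F
      ≤ n * √F + n / (Nat.sqrt F + 1) * F := by gcongr
    _ = n * √F + n * (F / (Nat.sqrt F + 1)) := by ring
    _ ≤ n * √F + n * √F := by gcongr
    _ = 2 * n * √F := by ring

theorem stmt1_general (n F : ℕ)
    (E : Finset (Fin n × Fin n))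
    (htopo : ∀ e ∈ E, e.1 < e.2)
    (hcut : ∀ k : ℕ,
      (E.filter (fun e => (e.1 : ℕ) < k ∧ k ≤ (e.2 : ℕ))).card ≤ F) :
    (E.card : ℝ) ≤ 2 * n * Real.sqrt F := by
  calc (E.card : ℝ) ≤ ((n * Nat.sqrt F + n / (Nat.sqrt F + 1) * F : ℕ) : ℝ) := by
        exact_mod_cast TopologicalEdges.card_le_mul_add_div_mul htopo hcut (Nat.sqrt F)
    _ ≤ 2 * n * Real.sqrt F := by
        push_cast
        exact mul_natSqrt_add_div_mul_le n F

/-- A DAG given by an edge set on `Fin n` oriented along a topological order,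
all prefix cuts of size at most `F`, has at most `2n√F` edges. -/
theorem stmt1 (n F : ℕ) (hF : 1 ≤ F)
    (E : Finset (Fin n × Fin n))
    (htopo : ∀ e ∈ E, e.1 < e.2)
    (hcut : ∀ k : ℕ,
      (E.filter (fun e => (e.1 : ℕ) < k ∧ k ≤ (e.2 : ℕ))).card ≤ F) :
    (E.card : ℝ) ≤ 2 * n * Real.sqrt F :=
  stmt1_general n F E htopo hcut
end

section
/- Any integral acyclic st-flow of value F in a unit-capacity directed graph on n vertices uses at most 2n√F edges. In particular, since F ≤ n, it uses at most 2n^{3/2} edges. -/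
/-!
Number the vertices `0, …, n - 1` injectively so that every flow edge goes up, and call
`σ v - σ u` the length of the edge `(u, v)`. No flow enters a prefix `{σ ≤ k}`, so the flow
leaving it is its total excess, at most `F`; an edge of length `ℓ` leaves `ℓ` of the `n`
prefixes, so the flow edges have total length at most `nF`. Hence at most `nF / √F = n√F`
edges are longer than `√F`, and at most `n√F` are shorter, since an edge is determined by its
tail and its length.
-/

open Finset Function

section Rank

variable {α β : Type*} [Fintype α] [LinearOrder β]

def rank (ρ : α → β) (v : α) : ℕ := #{u | ρ u < ρ v}

lemma rank_lt_card (ρ : α → β) (v : α) : rank ρ v < Fintype.card α :=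
  card_lt_card (filter_ssubset.2 ⟨v, mem_univ v, lt_irrefl _⟩)

lemma rank_lt_rank {ρ : α → β} {u v : α} (h : ρ u < ρ v) : rank ρ u < rank ρ v := by
  refine card_lt_card ((ssubset_iff_of_subset fun w hw => ?_).2 ⟨u, by simpa, by simp⟩)
  simp only [mem_filter, mem_univ, true_and] at hw ⊢
  exact hw.trans h

lemma rank_injective {ρ : α → β} (hρ : Injective ρ) : Injective (rank ρ) := by
  intro u v huv
  by_contra hne
  rcases (hρ.ne hne).lt_or_gt with h | h
  · exact (rank_lt_rank h).ne huv
  · exact (rank_lt_rank h).ne' huv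

lemma exists_numbering_of_potential [LinearOrder α] (π : α → β) :
    ∃ σ : α → ℕ, Injective σ ∧ (∀ v, σ v < Fintype.card α) ∧
      ∀ u v, π u < π v → σ u < σ v :=
  ⟨rank fun v => toLex (π v, v),
    rank_injective fun _ _ h => congrArg Prod.snd (toLex.injective h),
    rank_lt_card _,
    fun _ _ h => rank_lt_rank (Prod.Lex.toLex_lt_toLex.2 (Or.inl h))⟩

end Rank

section Counting

variable {V : Type*} [Fintype V] {σ : V → ℕ} {S : Finset (V × V)}

lemma card_filter_sub_le_mul (hσ : Injective σ) (hS : ∀ e ∈ S, σ e.1 < σ e.2) (m : ℕ) :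
    #{e ∈ S | σ e.2 - σ e.1 ≤ m} ≤ Fintype.card V * m := by
  calc #{e ∈ S | σ e.2 - σ e.1 ≤ m}
      ≤ #((univ : Finset V) ×ˢ Icc 1 m) := by
        refine card_le_card_of_injOn (fun e => (e.1, σ e.2 - σ e.1)) ?_ ?_
        · intro e he
          have := hS e (mem_filter.1 he).1
          simp only [coe_filter, Set.mem_ofPred_eq] at he
          simp only [coe_product, coe_univ, coe_Icc, Set.mem_prod, Set.mem_univ,
            Set.mem_Icc, true_and]
          omega
        · intro e he e' he' hee'
          have h := hS e (mem_filter.1 he).1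
          have h' := hS e' (mem_filter.1 he').1
          simp only [Prod.mk.injEq] at hee'
          obtain ⟨h1, h2⟩ := hee'
          refine Prod.ext h1 (hσ ?_)
          rw [h1] at h h2
          omega
    _ = Fintype.card V * m := by simp

lemma card_le_two_mul_sqrt (hσ : Injective σ) (hS : ∀ e ∈ S, σ e.1 < σ e.2) {L : ℕ}
    (hL : ∑ e ∈ S, (σ e.2 - σ e.1) ≤ Fintype.card V * L) :
    (#S : ℝ) ≤ 2 * Fintype.card V * √L := by
  set n := Fintype.card V
  set m := Nat.sqrt L
  have hshort := card_filter_sub_le_mul hσ hS m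
  have hlong : #{e ∈ S | ¬σ e.2 - σ e.1 ≤ m} * (m + 1) ≤ n * L :=
    calc #{e ∈ S | ¬σ e.2 - σ e.1 ≤ m} * (m + 1)
        ≤ ∑ e ∈ S with ¬σ e.2 - σ e.1 ≤ m, (σ e.2 - σ e.1) :=
          smul_eq_mul (#_) (m + 1) ▸ card_nsmul_le_sum _ _ _ fun e he => by
            simp only [mem_filter] at he; omega
      _ ≤ ∑ e ∈ S, (σ e.2 - σ e.1) := sum_le_sum_of_subset (filter_subset _ _)
      _ ≤ n * L := hL
  have hsplit := card_filter_add_card_filter_not (s := S) (fun e => σ e.2 - σ e.1 ≤ m)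
  have hm : (m : ℝ) ≤ √L := Real.nat_sqrt_le_real_sqrt
  have hm' : √L < m + 1 := Real.real_sqrt_lt_nat_sqrt_succ
  have hLsq : √L * √L = L := Real.mul_self_sqrt L.cast_nonneg
  have hn : (0 : ℝ) ≤ n := n.cast_nonneg
  have hshortR : (#{e ∈ S | σ e.2 - σ e.1 ≤ m} : ℝ) ≤ n * √L :=
    (Nat.cast_le.2 hshort).trans (by push_cast; gcongr)
  have hlongR : (#{e ∈ S | ¬σ e.2 - σ e.1 ≤ m} : ℝ) ≤ n * √L := by
    have : (#{e ∈ S | ¬σ e.2 - σ e.1 ≤ m} : ℝ) * (m + 1) ≤ n * √L * (m + 1) := by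
      calc (#{e ∈ S | ¬σ e.2 - σ e.1 ≤ m} : ℝ) * (m + 1) ≤ n * (√L * √L) := by
            rw [hLsq]; exact_mod_cast hlong
        _ ≤ n * √L * (m + 1) := by rw [← mul_assoc]; gcongr
    exact le_of_mul_le_mul_right this (by positivity)
  rw [← hsplit]
  push_cast
  linarith

end Counting

section Flow

variable {V : Type*} [Fintype V]

structure IsFlow (f : V × V → ℕ) (s t : V) (F : ℕ) : Prop where
  conservation : ∀ v, v ≠ s → v ≠ t → ∑ u, f (v, u) = ∑ u, f (u, v)
  value : ∑ u, f (s, u) = F + ∑ u, f (u, s)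

def excess (f : V × V → ℕ) (v : V) : ℤ := ∑ u, (f (v, u) : ℤ) - ∑ u, (f (u, v) : ℤ)

lemma sum_excess_eq_zero (f : V × V → ℕ) : ∑ v, excess f v = 0 := by
  simp only [excess, sum_sub_distrib]
  rw [sum_comm, sub_self]

variable {f : V × V → ℕ} {s t : V} {F : ℕ}

lemma IsFlow.excess_source (hf : IsFlow f s t F) : excess f s = F := by
  simp only [excess]
  rw [← Nat.cast_sum, ← Nat.cast_sum, hf.value]
  push_cast
  ring

lemma IsFlow.excess_eq_zero (hf : IsFlow f s t F) {v : V} (hs : v ≠ s) (ht : v ≠ t) :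
    excess f v = 0 := by
  simp only [excess]
  rw [← Nat.cast_sum, ← Nat.cast_sum, hf.conservation v hs ht, sub_self]

lemma IsFlow.value_le_card (hf : IsFlow f s t F) (hunit : ∀ e, f e ≤ 1) :
    F ≤ Fintype.card V :=
  calc F ≤ ∑ u, f (s, u) := hf.value ▸ Nat.le_add_right _ _
    _ ≤ ∑ _u : V, 1 := sum_le_sum fun u _ => hunit _
    _ = Fintype.card V := by simp

variable [DecidableEq V]

lemma IsFlow.excess_le (hf : IsFlow f s t F) (v : V) :
    excess f v ≤ if v = s then (F : ℤ) else 0 := by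
  by_cases hs : v = s
  · simp [hs, hf.excess_source]
  rw [if_neg hs]
  by_cases ht : v = t
  · subst ht
    -- the source is the only vertex other than the sink with nonzero excess
    have hrest : ∑ w ∈ univ.erase v, excess f w = F := by
      rw [sum_eq_single_of_mem s (mem_erase.2 ⟨Ne.symm hs, mem_univ s⟩)
        fun w hw hws => hf.excess_eq_zero hws (ne_of_mem_erase hw)]
      exact hf.excess_source
    have := add_sum_erase univ (excess f) (mem_univ v)
    rw [hrest, sum_excess_eq_zero] at this
    omega
  · exact (hf.excess_eq_zero hs ht).le

lemma IsFlow.sum_excess_le (hf : IsFlow f s t F) (A : Finset V) : ∑ v ∈ A, excess f v ≤ F :=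
  calc ∑ v ∈ A, excess f v ≤ ∑ v ∈ A, if v = s then (F : ℤ) else 0 :=
        sum_le_sum fun v _ => hf.excess_le v
    _ ≤ F := by rw [sum_ite_eq']; split_ifs <;> simp

lemma sum_excess_eq_sub (f : V × V → ℕ) (A : Finset V) :
    ∑ v ∈ A, excess f v = ∑ e ∈ A ×ˢ Aᶜ, (f e : ℤ) - ∑ e ∈ Aᶜ ×ˢ A, (f e : ℤ) := by
  simp only [excess, sum_sub_distrib, sum_product]
  simp_rw [← sum_add_sum_compl A, sum_add_distrib]
  have hinner : ∑ v ∈ A, ∑ u ∈ A, (f (v, u) : ℤ) = ∑ v ∈ A, ∑ u ∈ A, (f (u, v) : ℤ) :=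
    sum_comm
  rw [hinner, sum_comm (s := Aᶜ)]
  ring

lemma IsFlow.sum_product_compl_le (hf : IsFlow f s t F) {A : Finset V}
    (hA : ∀ e ∈ Aᶜ ×ˢ A, f e = 0) : ∑ e ∈ A ×ˢ Aᶜ, f e ≤ F := by
  have h := sum_excess_eq_sub f A
  rw [sum_eq_zero (s := Aᶜ ×ˢ A) fun e he => by exact_mod_cast hA e he] at h
  have := hf.sum_excess_le A
  zify
  linarith

lemma IsFlow.sum_mul_sub_le (hf : IsFlow f s t F) {σ : V → ℕ} {N : ℕ} (hN : ∀ v, σ v ≤ N)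
    (hσ : ∀ e, f e ≠ 0 → σ e.1 < σ e.2) : ∑ e, f e * (σ e.2 - σ e.1) ≤ N * F := by
  have hcut : ∀ k, ∑ e with σ e.1 ≤ k ∧ k < σ e.2, f e ≤ F := by
    intro k
    set A : Finset V := {v | σ v ≤ k}
    have hcross : ({e | σ e.1 ≤ k ∧ k < σ e.2} : Finset (V × V)) = A ×ˢ Aᶜ := by
      ext e; simp [A]
    rw [hcross]
    refine hf.sum_product_compl_le fun e he => ?_
    simp only [A, mem_product, mem_compl, mem_filter, mem_univ, true_and] at he
    by_contra h
    have := hσ e h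
    omega
  have hlength : ∀ e : V × V,
      f e * (σ e.2 - σ e.1) = ∑ k ∈ range N with σ e.1 ≤ k ∧ k < σ e.2, f e := by
    intro e
    have hIco : {k ∈ range N | σ e.1 ≤ k ∧ k < σ e.2} = Ico (σ e.1) (σ e.2) := by
      have := hN e.2
      ext k; simp only [mem_filter, mem_range, mem_Ico]; omega
    rw [sum_const, hIco, Nat.card_Ico, smul_eq_mul, mul_comm]
  calc ∑ e, f e * (σ e.2 - σ e.1)
      = ∑ k ∈ range N, ∑ e with σ e.1 ≤ k ∧ k < σ e.2, f e := by
        simp only [hlength, sum_filter]; exact sum_comm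
    _ ≤ ∑ _k ∈ range N, F := sum_le_sum fun k _ => hcut k
    _ = N * F := by simp

end Flow

theorem stmt2_general (n : ℕ) (s t : Fin n)
    (f : Fin n × Fin n → ℕ)
    (hunit : ∀ e, f e ≤ 1)
    (hcons : ∀ v : Fin n, v ≠ s → v ≠ t →
      ∑ u : Fin n, f (v, u) = ∑ u : Fin n, f (u, v))
    (F : ℕ)
    (hval : (∑ u : Fin n, f (s, u)) = F + ∑ u : Fin n, f (u, s))
    (π : Fin n → ℕ)
    (hacyc : ∀ u v : Fin n, f (u, v) = 1 → π u < π v) :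
    ((Finset.univ.filter (fun e : Fin n × Fin n => f e = 1)).card : ℝ)
        ≤ 2 * n * Real.sqrt F ∧
    ((Finset.univ.filter (fun e : Fin n × Fin n => f e = 1)).card : ℝ)
        ≤ 2 * (n : ℝ) ^ ((3 : ℝ) / 2) := by
  have hf : IsFlow f s t F := ⟨hcons, hval⟩
  have hf01 : ∀ e, f e ≠ 0 ↔ f e = 1 := fun e => by have := hunit e; omega
  obtain ⟨σ, hσ, hσn, hσπ⟩ := exists_numbering_of_potential π
  have hup : ∀ e, f e ≠ 0 → σ e.1 < σ e.2 := fun e he =>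
    hσπ _ _ (hacyc _ _ ((hf01 e).1 he))
  have hlen : ∑ e with f e = 1, (σ e.2 - σ e.1) ≤ Fintype.card (Fin n) * F := by
    calc ∑ e with f e = 1, (σ e.2 - σ e.1) = ∑ e, f e * (σ e.2 - σ e.1) := by
          rw [sum_filter]
          refine sum_congr rfl fun e _ => ?_
          rcases Nat.le_one_iff_eq_zero_or_eq_one.1 (hunit e) with h | h <;> simp [h]
      _ ≤ Fintype.card (Fin n) * F := hf.sum_mul_sub_le (fun v => (hσn v).le) hup
  have hcard :=
    card_le_two_mul_sqrt hσ (fun e he => hup e ((hf01 e).2 (mem_filter.1 he).2)) hlen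
  rw [Fintype.card_fin] at hcard
  refine ⟨hcard, hcard.trans ?_⟩
  have hFn : (F : ℝ) ≤ n := by exact_mod_cast Fintype.card_fin n ▸ hf.value_le_card hunit
  calc 2 * n * √F ≤ 2 * n * √n := by gcongr
    _ = 2 * (n : ℝ) ^ ((3 : ℝ) / 2) := by
      rw [show (3 : ℝ) / 2 = 1 + 1 / 2 by norm_num, Real.rpow_add' n.cast_nonneg (by norm_num),
        Real.rpow_one, ← Real.sqrt_eq_rpow, mul_assoc]

/-- Any integral acyclic `st`-flow of value `F` in a unit-capacity directed
graph on `n` vertices uses at most `2n√F` edges; in particular at most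
`2 n^{3/2}` edges. -/
theorem stmt2 (n : ℕ) (s t : Fin n)
    (E : Finset (Fin n × Fin n))
    (f : Fin n × Fin n → ℕ)
    (hsupp : ∀ e, f e = 1 → e ∈ E)
    (hunit : ∀ e, f e ≤ 1)
    (hcons : ∀ v : Fin n, v ≠ s → v ≠ t →
      ∑ u : Fin n, f (v, u) = ∑ u : Fin n, f (u, v))
    (F : ℕ)
    (hval : (∑ u : Fin n, f (s, u)) = F + ∑ u : Fin n, f (u, s))
    (π : Fin n → ℕ)
    (hacyc : ∀ u v : Fin n, f (u, v) = 1 → π u < π v) :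
    ((Finset.univ.filter (fun e : Fin n × Fin n => f e = 1)).card : ℝ)
        ≤ 2 * n * Real.sqrt F ∧
    ((Finset.univ.filter (fun e : Fin n × Fin n => f e = 1)).card : ℝ)
        ≤ 2 * (n : ℝ) ^ ((3 : ℝ) / 2) :=
  stmt2_general n s t f hunit hcons F hval π hacyc
end

section
/- Let G be a directed graph with m edges and integral edge costs c ∈ ℤ^E, and let f and f* be two feasible integral flows for the same demands, where f* is optimal for cost c. If cᵀf ≤ cᵀf* + μ·n for some μ > 0, then f can be converted to an optimal flow f' by augmenting along negative-cost cycles in the residual graph, and ‖f - f'‖₁ ≤ μ·n² (assuming each augmenting cycle has cost at most -1 and uses at most n edges, and each augmentation sends at least 1 unit). In particular ‖f - f'‖_∞ ≤ μ·n². -/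
/-!
The difference `f* - f` of two feasible flows is a circulation of cost `-(cᵀf - cᵀf*)`. Following
arcs of its support until a vertex repeats yields a simple cycle, of length at most `n`,
conformal to it; peeling such cycles off shows that a circulation of negative cost has a conformal
simple cycle of negative cost. Augmenting `f` along that cycle moves it towards `f*`, so it stays
feasible, lowers the integral cost by at least one and changes `f` by at most `n` in `ℓ₁`. After at
most `cᵀf - cᵀf* ≤ μn` augmentations the flow is optimal.
-/

open Finset Function

theorem Function.exists_mem_periodicPts {α : Type*} [Finite α] [Nonempty α] (f : α → α) :
    ∃ x, x ∈ periodicPts f := by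
  obtain ⟨i, j, hij, heq⟩ :=
    Finite.exists_ne_map_eq_of_infinite fun k : ℕ ↦ f^[k] (Classical.arbitrary α)
  wlog hlt : i < j generalizing i j
  · exact this j i hij.symm heq.symm (by omega)
  refine ⟨f^[i] (Classical.arbitrary α), mk_mem_periodicPts (Nat.sub_pos_of_lt hlt) ?_⟩
  rw [IsPeriodicPt, IsFixedPt, ← iterate_add_apply, Nat.sub_add_cancel hlt.le]
  exact heq.symm

theorem exists_simple_closed_walk {α : Type*} [Fintype α] [Nonempty α] (r : α → α → Prop)
    (h : ∀ a, ∃ b, r a b) :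
    ∃ v : ℕ → α, ∃ m, 0 < m ∧ m ≤ Fintype.card α ∧ v m = v 0 ∧ Set.InjOn v (Set.Iio m) ∧
      ∀ t, r (v t) (v (t + 1)) := by
  choose next hnext using h
  obtain ⟨x, hx⟩ := exists_mem_periodicPts next
  refine ⟨fun t ↦ next^[t] x, minimalPeriod next x, minimalPeriod_pos_of_mem_periodicPts hx,
    minimalPeriod_le_card, iterate_minimalPeriod, iterate_injOn_Iio_minimalPeriod, fun t ↦ ?_⟩
  simp only [iterate_succ_apply']
  exact hnext _

theorem abs_sub_of_mem_uIcc_zero {α : Type*} [AddCommGroup α] [LinearOrder α]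
    [IsOrderedAddMonoid α] {a x : α} (h : x ∈ Set.uIcc 0 a) : |a - x| = |a| - |x| := by
  rcases Set.mem_uIcc.mp h with ⟨h0, h1⟩ | ⟨h0, h1⟩
  · rw [abs_of_nonneg (sub_nonneg.mpr h1), abs_of_nonneg h0, abs_of_nonneg (h0.trans h1)]
  · rw [abs_of_nonpos (sub_nonpos.mpr h0), abs_of_nonpos h1, abs_of_nonpos (h0.trans h1)]
    abel

namespace MinCostFlow

def IsConformal {ι : Type*} (χ d : ι → ℤ) : Prop := ∀ e, χ e ∈ Set.uIcc 0 (d e)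

theorem IsConformal.of_sub {ι : Type*} {χ χ' d : ι → ℤ} (hχ : IsConformal χ d)
    (hχ' : IsConformal χ' (d - χ)) : IsConformal χ' d := fun e ↦ by
  have h := hχ e
  have h' := hχ' e
  simp only [Set.mem_uIcc, Pi.sub_apply] at h h' ⊢
  omega

variable {V : Type*}

def IsSupportArc (d : V × V → ℤ) (a b : V) : Prop := 0 < d (a, b) ∨ d (b, a) < 0

section Arc

variable [DecidableEq V]

def arcVector (d : V × V → ℤ) (a b : V) : V × V → ℤ :=
  if 0 < d (a, b) then Pi.single (a, b) 1 else -Pi.single (b, a) 1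

theorem arcVector_mem_uIcc {d : V × V → ℤ} {a b : V} (h : IsSupportArc d a b) (e : V × V) :
    arcVector d a b e ∈ Set.uIcc 0 (d e) := by
  unfold arcVector
  split_ifs with hab
  · by_cases he : e = (a, b)
    · subst he; simp [Set.mem_uIcc]; omega
    · simp [he]
  · have hba : d (b, a) < 0 := h.resolve_left hab
    by_cases he : e = (b, a)
    · subst he; simp [Set.mem_uIcc]; omega
    · simp [he]

/-- The support of a step determines the vertex it leaves, so the steps of a simple walk have
disjoint supports. -/
theorem eq_of_arcVector_apply_ne_zero {d : V × V → ℤ} {a b : V} (h : IsSupportArc d a b)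
    {e : V × V} (he : arcVector d a b e ≠ 0) : a = if 0 < d e then e.1 else e.2 := by
  unfold arcVector at he
  split_ifs at he with hab
  · obtain rfl : e = (a, b) := by by_contra hne; simp [hne] at he
    simp [hab]
  · obtain rfl : e = (b, a) := by by_contra hne; simp [hne] at he
    simp [(h.resolve_left hab).not_gt]

theorem exists_arcVector_apply_ne_zero (d : V × V → ℤ) (a b : V) :
    ∃ e, arcVector d a b e ≠ 0 := by
  unfold arcVector
  split_ifs
  · exact ⟨(a, b), by simp⟩
  · exact ⟨(b, a), by simp⟩

section ClosedWalk

variable {d : V × V → ℤ} {v : ℕ → V} {m : ℕ}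

def walkVector (d : V × V → ℤ) (v : ℕ → V) (m : ℕ) : V × V → ℤ :=
  ∑ t ∈ range m, arcVector d (v t) (v (t + 1))

theorem walkVector_apply_of_ne_zero (hinj : Set.InjOn v (Set.Iio m))
    (harc : ∀ t, IsSupportArc d (v t) (v (t + 1))) {e : V × V} {s : ℕ} (hs : s < m)
    (he : arcVector d (v s) (v (s + 1)) e ≠ 0) :
    walkVector d v m e = arcVector d (v s) (v (s + 1)) e := by
  rw [walkVector, Finset.sum_apply]
  refine sum_eq_single_of_mem s (mem_range.mpr hs) fun t ht hts ↦ ?_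
  by_contra ht0
  exact hts <| hinj (mem_range.mp ht) hs <|
    (eq_of_arcVector_apply_ne_zero (harc t) ht0).trans
      (eq_of_arcVector_apply_ne_zero (harc s) he).symm

theorem isConformal_walkVector (hinj : Set.InjOn v (Set.Iio m))
    (harc : ∀ t, IsSupportArc d (v t) (v (t + 1))) : IsConformal (walkVector d v m) d := by
  intro e
  by_cases h : ∃ s < m, arcVector d (v s) (v (s + 1)) e ≠ 0
  · obtain ⟨s, hs, he⟩ := h
    rw [walkVector_apply_of_ne_zero hinj harc hs he]
    exact arcVector_mem_uIcc (harc s) e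
  · push Not at h
    have : walkVector d v m e = 0 := by
      rw [walkVector, Finset.sum_apply]
      exact sum_eq_zero fun t ht ↦ h t (mem_range.mp ht)
    rw [this]
    exact Set.left_mem_uIcc

theorem walkVector_ne_zero (hinj : Set.InjOn v (Set.Iio m))
    (harc : ∀ t, IsSupportArc d (v t) (v (t + 1))) (hm : 0 < m) : walkVector d v m ≠ 0 := by
  obtain ⟨e, he⟩ := exists_arcVector_apply_ne_zero d (v 0) (v (0 + 1))
  exact Function.ne_iff.mpr ⟨e, (walkVector_apply_of_ne_zero hinj harc hm he).trans_ne he⟩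

end ClosedWalk

end Arc

variable [Fintype V]

def divergence : (V × V → ℤ) →+ (V → ℤ) where
  toFun x v := ∑ w, x (v, w) - ∑ w, x (w, v)
  map_zero' := by ext; simp
  map_add' x y := by ext; simp only [Pi.add_apply, sum_add_distrib]; ring

theorem divergence_apply (x : V × V → ℤ) (v : V) :
    divergence x v = ∑ w, x (v, w) - ∑ w, x (w, v) := rfl

theorem IsSupportArc.exists_succ {d : V × V → ℤ} (hd : divergence d = 0) {a w : V}
    (h : IsSupportArc d a w) : ∃ x, IsSupportArc d w x := by
  by_contra! hno
  have hout : ∀ x, d (w, x) ≤ 0 := fun x ↦ not_lt.mp fun hx ↦ hno x (.inl hx)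
  have hin : ∀ x, 0 ≤ d (x, w) := fun x ↦ not_lt.mp fun hx ↦ hno x (.inr hx)
  have hbal : ∑ x, d (w, x) = ∑ x, d (x, w) := sub_eq_zero.mp (congrFun hd w)
  rcases h with h | h
  · have : 0 < ∑ x, d (x, w) := sum_pos' (fun x _ ↦ hin x) ⟨a, mem_univ a, h⟩
    linarith [sum_nonpos fun x (_ : x ∈ univ) ↦ hout x]
  · have : ∑ x, d (w, x) < 0 := sum_neg' (fun x _ ↦ hout x) ⟨a, mem_univ a, h⟩
    linarith [sum_nonneg fun x (_ : x ∈ univ) ↦ hin x]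

theorem exists_simple_closed_walk_isSupportArc {d : V × V → ℤ} (hd : divergence d = 0)
    (hd0 : d ≠ 0) :
    ∃ v : ℕ → V, ∃ m, 0 < m ∧ m ≤ Fintype.card V ∧ v m = v 0 ∧ Set.InjOn v (Set.Iio m) ∧
      ∀ t, IsSupportArc d (v t) (v (t + 1)) := by
  classical
  obtain ⟨e, he⟩ := Function.ne_iff.mp hd0
  have : Nonempty {a // ∃ b, IsSupportArc d a b} := by
    rcases lt_or_gt_of_ne he with he | he
    · exact ⟨⟨e.2, e.1, .inr he⟩⟩
    · exact ⟨⟨e.1, e.2, .inl he⟩⟩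
  obtain ⟨v, m, hm, hmV, hvm, hinj, hv⟩ := exists_simple_closed_walk
    (fun p q : {a // ∃ b, IsSupportArc d a b} ↦ IsSupportArc d p q)
    fun ⟨a, b, hab⟩ ↦ ⟨⟨b, hab.exists_succ hd⟩, hab⟩
  exact ⟨fun t ↦ v t, m, hm, hmV.trans (Fintype.card_subtype_le _), congrArg _ hvm,
    Subtype.val_injective.comp_injOn hinj, hv⟩

variable [DecidableEq V]

theorem divergence_single (a b : V) :
    divergence (Pi.single (a, b) 1) = Pi.single a 1 - Pi.single b 1 := by
  ext v
  simp only [divergence_apply, Pi.single_apply, Prod.ext_iff, Pi.sub_apply]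
  by_cases hva : v = a <;> by_cases hvb : v = b <;> simp [hva, hvb, ite_and]

theorem divergence_arcVector (d : V × V → ℤ) (a b : V) :
    divergence (arcVector d a b) = Pi.single a 1 - Pi.single b 1 := by
  unfold arcVector
  split_ifs
  · exact divergence_single a b
  · rw [map_neg, divergence_single, neg_sub]

theorem sum_abs_arcVector (d : V × V → ℤ) (a b : V) : ∑ e, |arcVector d a b e| = 1 := by
  unfold arcVector
  split_ifs <;> simp [Pi.single_apply, apply_ite]

section ClosedWalk

variable {d : V × V → ℤ} {v : ℕ → V} {m : ℕ}

theorem divergence_walkVector (hvm : v m = v 0) : divergence (walkVector d v m) = 0 := by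
  simp only [walkVector, map_sum, divergence_arcVector, sum_range_sub', hvm, sub_self]

theorem sum_abs_walkVector_le : ∑ e, |walkVector d v m e| ≤ m :=
  calc ∑ e, |walkVector d v m e|
      ≤ ∑ e, ∑ t ∈ range m, |arcVector d (v t) (v (t + 1)) e| := by
        gcongr with e
        simpa only [walkVector, Finset.sum_apply] using abs_sum_le_sum_abs _ _
    _ = m := by rw [sum_comm]; simp [sum_abs_arcVector]

end ClosedWalk


theorem exists_isConformal_cycle {d : V × V → ℤ} (hd : divergence d = 0) (hd0 : d ≠ 0) :
    ∃ χ, divergence χ = 0 ∧ IsConformal χ d ∧ χ ≠ 0 ∧ ∑ e, |χ e| ≤ Fintype.card V := by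
  obtain ⟨v, m, hm, hmV, hvm, hinj, harc⟩ := exists_simple_closed_walk_isSupportArc hd hd0
  exact ⟨walkVector d v m, divergence_walkVector hvm, isConformal_walkVector hinj harc,
    walkVector_ne_zero hinj harc hm, sum_abs_walkVector_le.trans (by exact_mod_cast hmV)⟩

theorem exists_isConformal_cycle_dotProduct_neg (c : V × V → ℤ) {d : V × V → ℤ}
    (hd : divergence d = 0) (hcd : c ⬝ᵥ d < 0) :
    ∃ χ, divergence χ = 0 ∧ IsConformal χ d ∧ c ⬝ᵥ χ < 0 ∧ ∑ e, |χ e| ≤ Fintype.card V := by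
  induction hN : (∑ e, |d e|).toNat using Nat.strong_induction_on generalizing d with
  | _ N ih =>
  obtain ⟨χ, hχd, hχ, hχ0, hχV⟩ := exists_isConformal_cycle hd (by rintro rfl; simp at hcd)
  by_cases hcχ : c ⬝ᵥ χ < 0
  · exact ⟨χ, hχd, hχ, hcχ, hχV⟩
  have hχpos : 0 < ∑ e, |χ e| := by
    obtain ⟨e, he⟩ := Function.ne_iff.mp hχ0
    exact sum_pos' (fun e _ ↦ abs_nonneg _) ⟨e, mem_univ e, abs_pos.mpr he⟩
  have hsub : ∑ e, |(d - χ) e| = ∑ e, |d e| - ∑ e, |χ e| := by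
    rw [← sum_sub_distrib]
    exact sum_congr rfl fun e _ ↦ abs_sub_of_mem_uIcc_zero (hχ e)
  have hnonneg : 0 ≤ ∑ e, |(d - χ) e| := sum_nonneg fun e _ ↦ abs_nonneg _
  obtain ⟨χ', hχ'd, hχ', hcχ', hχ'V⟩ := ih _ (by omega) (d := d - χ)
    (by rw [map_sub, hd, hχd, sub_zero]) (by rw [dotProduct_sub]; omega) rfl
  exact ⟨χ', hχ'd, hχ.of_sub hχ', hcχ', hχ'V⟩

def IsFeasibleFlow (u : V × V → ℤ) (b : V → ℤ) (x : V × V → ℤ) : Prop :=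
  (∀ e, x e ∈ Set.Icc 0 (u e)) ∧ divergence x = b

section Feasible

variable {u c f g : V × V → ℤ} {b : V → ℤ}

theorem exists_isFeasibleFlow_add_cycle (hf : IsFeasibleFlow u b f) (hg : IsFeasibleFlow u b g)
    (hcost : c ⬝ᵥ g < c ⬝ᵥ f) :
    ∃ χ, IsFeasibleFlow u b (f + χ) ∧ c ⬝ᵥ χ < 0 ∧ ∑ e, |χ e| ≤ Fintype.card V := by
  obtain ⟨χ, hχd, hχ, hcχ, hχV⟩ := exists_isConformal_cycle_dotProduct_neg c (d := g - f)
    (by rw [map_sub, hf.2, hg.2, sub_self]) (by rw [dotProduct_sub]; omega)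
  refine ⟨χ, ⟨fun e ↦ Set.uIcc_subset_Icc (hf.1 e) (hg.1 e) ?_, ?_⟩, hcχ, hχV⟩
  · have h := hχ e
    simp only [Set.mem_uIcc, Pi.sub_apply, Pi.add_apply] at h ⊢
    omega
  · rw [map_add, hχd, hf.2, add_zero]

theorem exists_isFeasibleFlow_dotProduct_le_of_sub_le (hf : IsFeasibleFlow u b f)
    (hg : IsFeasibleFlow u b g) (k : ℕ) (hk : c ⬝ᵥ f - c ⬝ᵥ g ≤ k) :
    ∃ f', IsFeasibleFlow u b f' ∧ c ⬝ᵥ f' ≤ c ⬝ᵥ g ∧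
      ∑ e, |f e - f' e| ≤ Fintype.card V * k := by
  induction k generalizing f with
  | zero => exact ⟨f, hf, by omega, by simp⟩
  | succ k ih =>
    by_cases hfg : c ⬝ᵥ f ≤ c ⬝ᵥ g
    · exact ⟨f, hf, hfg, by simp⟩
    obtain ⟨χ, hfχ, hcχ, hχV⟩ := exists_isFeasibleFlow_add_cycle hf hg (not_le.mp hfg)
    obtain ⟨f', hf', hcf', hdist⟩ := ih hfχ (by rw [dotProduct_add]; push_cast at hk; omega)
    refine ⟨f', hf', hcf', ?_⟩
    calc ∑ e, |f e - f' e| ≤ ∑ e, (|χ e| + |(f + χ) e - f' e|) := by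
          gcongr with e
          simpa using abs_sub_le (f e) ((f + χ) e) (f' e)
      _ ≤ Fintype.card V * (k + 1 : ℕ) := by
          rw [sum_add_distrib]; push_cast; linarith

end Feasible

end MinCostFlow

theorem stmt10_general (n : ℕ) (c u : Fin n × Fin n → ℤ) (b : Fin n → ℤ)
    (μ : ℝ)
    (Feasible : (Fin n × Fin n → ℤ) → Prop)
    (hfeas : ∀ x, Feasible x ↔
      ((∀ e, 0 ≤ x e ∧ x e ≤ u e) ∧
        ∀ v : Fin n, (∑ w : Fin n, x (v, w)) - (∑ w : Fin n, x (w, v)) = b v))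
    (f fstar : Fin n × Fin n → ℤ)
    (hf : Feasible f) (hfstar : Feasible fstar)
    (hopt : ∀ g, Feasible g → (∑ e, c e * fstar e) ≤ ∑ e, c e * g e)
    (hnear : (∑ e, (c e : ℝ) * f e) ≤ (∑ e, (c e : ℝ) * fstar e) + μ * n) :
    ∃ f' : Fin n × Fin n → ℤ, Feasible f' ∧
      (∀ g, Feasible g → (∑ e, c e * f' e) ≤ ∑ e, c e * g e) ∧
      (∑ e, |(f e : ℝ) - (f' e : ℝ)|) ≤ μ * n ^ 2 ∧
      ∀ e, |(f e : ℝ) - (f' e : ℝ)| ≤ μ * n ^ 2 := by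
  have hfeas' : ∀ x, Feasible x ↔ MinCostFlow.IsFeasibleFlow u b x := fun x ↦ by
    rw [hfeas, MinCostFlow.IsFeasibleFlow, funext_iff]
    rfl
  set gap := c ⬝ᵥ f - c ⬝ᵥ fstar
  have hgap : (gap.toNat : ℤ) = gap := Int.toNat_of_nonneg (sub_nonneg.mpr (hopt f hf))
  have hgapμ : (gap : ℝ) ≤ μ * n := by
    simp only [gap, dotProduct, Int.cast_sub, Int.cast_sum, Int.cast_mul]
    linarith
  obtain ⟨f', hf', hcf', hdist⟩ := MinCostFlow.exists_isFeasibleFlow_dotProduct_le_of_sub_le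
    ((hfeas' f).mp hf) ((hfeas' fstar).mp hfstar) gap.toNat hgap.ge
  have hl1 : ∑ e, |(f e : ℝ) - f' e| ≤ μ * n ^ 2 :=
    calc ∑ e, |(f e : ℝ) - f' e| = ((∑ e, |f e - f' e| : ℤ) : ℝ) := by push_cast; rfl
      _ ≤ n * gap := by rw [← hgap]; exact_mod_cast (Fintype.card_fin n ▸ hdist)
      _ ≤ n * (μ * n) := by gcongr
      _ = μ * n ^ 2 := by ring
  refine ⟨f', (hfeas' f').mpr hf', fun g hg ↦ hcf'.trans (hopt g hg), hl1, fun e ↦ ?_⟩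
  exact (single_le_sum (fun e _ ↦ abs_nonneg _) (mem_univ e)).trans hl1

/-- A feasible integral flow whose cost is within `μn` of the optimum is within
`ℓ₁`-distance (hence `ℓ∞`-distance) `μn²` of some optimal integral flow. -/
theorem stmt10 (n : ℕ) (c u : Fin n × Fin n → ℤ) (b : Fin n → ℤ)
    (μ : ℝ) (hμ : 0 < μ)
    (Feasible : (Fin n × Fin n → ℤ) → Prop)
    (hfeas : ∀ x, Feasible x ↔
      ((∀ e, 0 ≤ x e ∧ x e ≤ u e) ∧
        ∀ v : Fin n, (∑ w : Fin n, x (v, w)) - (∑ w : Fin n, x (w, v)) = b v))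
    (f fstar : Fin n × Fin n → ℤ)
    (hf : Feasible f) (hfstar : Feasible fstar)
    (hopt : ∀ g, Feasible g → (∑ e, c e * fstar e) ≤ ∑ e, c e * g e)
    (hnear : (∑ e, (c e : ℝ) * f e) ≤ (∑ e, (c e : ℝ) * fstar e) + μ * n) :
    ∃ f' : Fin n × Fin n → ℤ, Feasible f' ∧
      (∀ g, Feasible g → (∑ e, c e * f' e) ≤ ∑ e, c e * g e) ∧
      (∑ e, |(f e : ℝ) - (f' e : ℝ)|) ≤ μ * n ^ 2 ∧
      ∀ e, |(f e : ℝ) - (f' e : ℝ)| ≤ μ * n ^ 2 :=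
  stmt10_general n c u b μ Feasible hfeas f fstar hf hfstar hopt hnear
end

section
/- Let h, v ∈ ℝ^n and suppose there is a partition [n] = I₁ ∪ ... ∪ I_k and vectors h̄, v̄ ∈ ℝ^k with h = ∑_i h̄_i·1_{I_i} and v = ∑_i v̄_i·1_{I_i} (h and v are constant on each block). Let f̄_i = √|I_i|. If ū ∈ ℝ^k maximizes ⟨h̄ ∘ f̄ ∘ f̄, w̄⟩ over w̄ with ‖(f̄ ∘ v̄) ∘ w̄‖₂ + ‖w̄‖_∞ ≤ 1, and u = ∑_i ū_i·1_{I_i}, then ⟨h, u⟩ = max{⟨h, w⟩ : w ∈ ℝ^n, ‖v ∘ w‖₂ + ‖w‖_∞ ≤ 1}. -/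
/-!
Averaging over the blocks `{j | p j = i}` maps every feasible `w ∈ ℝⁿ` to a feasible point of the
`k`-dimensional problem with the same objective value: the objective only sees the block sums of
`w`, the sup norm cannot grow under averaging, and by Cauchy–Schwarz `|I_i| · mean² ≤ ∑_{I_i} w_j²`,
so the weighted `ℓ₂` term cannot grow either. Conversely, lifting a `k`-dimensional point to a
block-constant vector preserves the objective and does not increase the mixed norm.
-/

open Finset

noncomputable section

def mixedNorm {ι : Type*} [Fintype ι] (v w : ι → ℝ) : ℝ :=
  √(∑ j, (v j * w j) ^ 2) + ‖w‖

namespace BlockConstant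

variable {α β : Type*} [Fintype α] [DecidableEq β] (p : α → β)

def freqWeight (i : β) : ℝ := √(#{j | p j = i} : ℝ)

-- Empty blocks get mean `0`; their weight `freqWeight p i` vanishes, so this is harmless.
def blockMean (w : α → ℝ) (i : β) : ℝ := (∑ j with p j = i, w j) / #{j | p j = i}

lemma freqWeight_mul_self (i : β) : freqWeight p i * freqWeight p i = #{j | p j = i} :=
  Real.mul_self_sqrt (Nat.cast_nonneg _)

lemma card_mul_blockMean (w : α → ℝ) (i : β) :
    #{j | p j = i} * blockMean p w i = ∑ j with p j = i, w j := by
  rcases eq_or_ne #{j | p j = i} 0 with h0 | h0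
  · simp [card_eq_zero.1 h0]
  · exact mul_div_cancel₀ _ (Nat.cast_ne_zero.2 h0)

lemma card_mul_blockMean_sq_le (w : α → ℝ) (i : β) :
    #{j | p j = i} * blockMean p w i ^ 2 ≤ ∑ j with p j = i, w j ^ 2 := by
  rcases eq_or_ne #{j | p j = i} 0 with h0 | h0
  · simp [card_eq_zero.1 h0]
  have hc : (0 : ℝ) < #{j | p j = i} := by exact_mod_cast Nat.pos_of_ne_zero h0
  rw [← le_div_iff₀' hc]
  exact sum_div_card_sq_le_sum_sq_div_card

variable [Fintype β]

lemma sum_comp_eq_sum_card_mul (g : β → ℝ) : ∑ j, g (p j) = ∑ i, #{j | p j = i} * g i := by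
  rw [← sum_fiberwise' univ p g]
  simp only [sum_const, nsmul_eq_mul]

lemma sum_comp_mul_eq_sum_mul_sum_fiber (g : β → ℝ) (w : α → ℝ) :
    ∑ j, g (p j) * w j = ∑ i, g i * ∑ j with p j = i, w j := by
  rw [← sum_fiberwise univ p]
  refine sum_congr rfl fun i _ => ?_
  rw [mul_sum]
  exact sum_congr rfl fun j hj => by rw [(mem_filter.1 hj).2]

lemma norm_blockMean_le (w : α → ℝ) : ‖blockMean p w‖ ≤ ‖w‖ := by
  refine (pi_norm_le_iff_of_nonneg (norm_nonneg w)).2 fun i => ?_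
  rcases eq_or_ne #{j | p j = i} 0 with h0 | h0
  · simp [blockMean, h0]
  have hc : (0 : ℝ) < #{j | p j = i} := by exact_mod_cast Nat.pos_of_ne_zero h0
  rw [blockMean, norm_div, Real.norm_natCast, div_le_iff₀ hc]
  calc ‖∑ j with p j = i, w j‖ ≤ ∑ j with p j = i, ‖w j‖ := norm_sum_le _ _
    _ ≤ #{j | p j = i} • ‖w‖ := sum_le_card_nsmul _ _ _ fun j _ => norm_le_pi_norm w j
    _ = ‖w‖ * #{j | p j = i} := by rw [nsmul_eq_mul, mul_comm]

lemma sum_comp_mul_comp (h u : β → ℝ) :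
    ∑ j, h (p j) * u (p j) = ∑ i, h i * freqWeight p i * freqWeight p i * u i := by
  rw [sum_comp_eq_sum_card_mul p fun i => h i * u i]
  refine sum_congr rfl fun i _ => ?_
  rw [mul_assoc (h i), freqWeight_mul_self]
  ring

lemma sum_comp_mul_eq_sum_blockMean (h : β → ℝ) (w : α → ℝ) :
    ∑ j, h (p j) * w j = ∑ i, h i * freqWeight p i * freqWeight p i * blockMean p w i := by
  rw [sum_comp_mul_eq_sum_mul_sum_fiber]
  refine sum_congr rfl fun i _ => ?_
  rw [mul_assoc (h i), freqWeight_mul_self, mul_assoc, card_mul_blockMean]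

lemma mixedNorm_comp_le (v u : β → ℝ) :
    mixedNorm (v ∘ p) (u ∘ p) ≤ mixedNorm (freqWeight p * v) u := by
  have hsum : ∑ j, (v (p j) * u (p j)) ^ 2 = ∑ i, (freqWeight p i * v i * u i) ^ 2 := by
    rw [sum_comp_eq_sum_card_mul p fun i => (v i * u i) ^ 2]
    refine sum_congr rfl fun i _ => ?_
    rw [← freqWeight_mul_self]
    ring
  exact add_le_add (Real.sqrt_le_sqrt hsum.le) (pi_norm_comp_le u p)

lemma mixedNorm_blockMean_le (v : β → ℝ) (w : α → ℝ) :
    mixedNorm (freqWeight p * v) (blockMean p w) ≤ mixedNorm (v ∘ p) w := by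
  have hsum : ∑ i, (freqWeight p i * v i * blockMean p w i) ^ 2 ≤ ∑ j, (v (p j) * w j) ^ 2 := by
    simp only [mul_pow, sum_comp_mul_eq_sum_mul_sum_fiber p (fun i => v i ^ 2)]
    refine sum_le_sum fun i _ => ?_
    calc freqWeight p i ^ 2 * v i ^ 2 * blockMean p w i ^ 2
        = v i ^ 2 * (#{j | p j = i} * blockMean p w i ^ 2) := by
          rw [← freqWeight_mul_self]; ring
      _ ≤ v i ^ 2 * ∑ j with p j = i, w j ^ 2 := by gcongr; exact card_mul_blockMean_sq_le p w i
  exact add_le_add (Real.sqrt_le_sqrt hsum) (norm_blockMean_le p w)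

end BlockConstant

end

open BlockConstant

/-- Lemma 7.5 of [BLN+20]: maximizing a linear functional over the mixed
`(ℓ₂+ℓ∞)`-ball with block-constant data reduces to a `k`-dimensional problem
with frequency weights `f̄_i = √|I_i|`; the block-constant lift of a
`k`-dimensional maximizer attains the `n`-dimensional optimum. -/
theorem stmt13 (n k : ℕ) (p : Fin n → Fin k)
    (hbar vbar : Fin k → ℝ) (h v : Fin n → ℝ)
    (hh : ∀ j, h j = hbar (p j)) (hv : ∀ j, v j = vbar (p j))
    (fbar : Fin k → ℝ)
    (hf : ∀ i, fbar i =
      Real.sqrt ((Finset.univ.filter (fun j => p j = i)).card))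
    (ubar : Fin k → ℝ)
    (hufeas : Real.sqrt (∑ i, (fbar i * vbar i * ubar i) ^ 2) + ‖ubar‖ ≤ 1)
    (humax : ∀ wbar : Fin k → ℝ,
      Real.sqrt (∑ i, (fbar i * vbar i * wbar i) ^ 2) + ‖wbar‖ ≤ 1 →
      (∑ i, hbar i * fbar i * fbar i * wbar i)
        ≤ ∑ i, hbar i * fbar i * fbar i * ubar i)
    (u : Fin n → ℝ) (hu : ∀ j, u j = ubar (p j)) :
    IsGreatest {r : ℝ | ∃ w : Fin n → ℝ,
        Real.sqrt (∑ j, (v j * w j) ^ 2) + ‖w‖ ≤ 1 ∧ r = ∑ j, h j * w j}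
      (∑ j, h j * u j) := by
  obtain rfl : h = hbar ∘ p := funext hh
  obtain rfl : v = vbar ∘ p := funext hv
  obtain rfl : u = ubar ∘ p := funext hu
  obtain rfl : fbar = freqWeight p := funext hf
  refine ⟨⟨ubar ∘ p, (mixedNorm_comp_le p vbar ubar).trans hufeas, rfl⟩, ?_⟩
  rintro r ⟨w, hw, rfl⟩
  simp only [Function.comp_apply]
  rw [sum_comp_mul_eq_sum_blockMean, sum_comp_mul_comp]
  exact humax _ ((mixedNorm_blockMean_le p vbar w).trans hw)
end

section
/- Suppose both w ≈_ε σ(W^{1/2-1/p} A) + z and σ̄ ≈_{ε_σ} σ(W^{1/2-1/p} A) + z hold entrywise, where w, z, σ̄ ∈ ℝ^m_{>0}, ε, ε_σ > 0, p ∈ (0,2), and W = diag(w). If w' = (w^{2/p-1} ∘ σ̄)^{p/2} entrywise, then each entry satisfies w'_e ≈_{(ε+ε_σ)|1-p/2| + ε_σ·(p/2)} (w_e^{2/p-1}·(σ(W^{1/2-1/p}A)_e + z_e))^{p/2} — i.e., the one-step Lewis-weight refinement w ↦ (w^{2/p-1}σ̄)^{p/2} contracts the multiplicative error by a factor |1 -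 p/2| up to the new approximation error ε_σ. -/
/-- One step of the Cohen–Peng Lewis-weight refinement: if
`w ≈_ε σ + z` and `σ̄ ≈_{ε_σ} σ + z` entrywise (where `σ` denotes the vector
of leverage scores `σ(W^{1/2-1/p}A)`), then the refined weights
`w' = (w^{2/p-1} σ̄)^{p/2}` satisfy
`w'ₑ ≈_{(ε+ε_σ)|1-p/2| + ε_σ p/2} (wₑ^{2/p-1}(σₑ + zₑ))^{p/2}`. -/
theorem stmt19 (m : ℕ) (p ε εσ : ℝ) (hp : 0 < p) (hp2 : p < 2)
    (hε : 0 < ε) (hεσ : 0 < εσ)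
    (w σbar z σlev : Fin m → ℝ)
    (hw : ∀ e, 0 < w e) (hσbar : ∀ e, 0 < σbar e) (hz : ∀ e, 0 < z e)
    (hσlev : ∀ e, 0 ≤ σlev e)
    (happrox1 : ∀ e, Real.exp (-ε) * (σlev e + z e) ≤ w e ∧
      w e ≤ Real.exp ε * (σlev e + z e))
    (happrox2 : ∀ e, Real.exp (-εσ) * (σlev e + z e) ≤ σbar e ∧
      σbar e ≤ Real.exp εσ * (σlev e + z e)) :
    ∀ e : Fin m,
      Real.exp (-((ε + εσ) * |1 - p / 2| + εσ * (p / 2)))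
          * ((w e ^ (2 / p - 1) * (σlev e + z e)) ^ (p / 2))
        ≤ (w e ^ (2 / p - 1) * σbar e) ^ (p / 2) ∧
      (w e ^ (2 / p - 1) * σbar e) ^ (p / 2)
        ≤ Real.exp ((ε + εσ) * |1 - p / 2| + εσ * (p / 2))
          * ((w e ^ (2 / p - 1) * (σlev e + z e)) ^ (p / 2)) := by
  intro e
  have hs : 0 < σlev e + z e := add_pos_of_nonneg_of_pos (hσlev e) (hz e)
  have hwα : 0 < w e ^ (2 / p - 1) := Real.rpow_pos_of_pos (hw e) _
  have hA : 0 ≤ (ε + εσ) * |1 - p / 2| := by positivity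
  have hhalf : 0 ≤ p / 2 := by positivity
  obtain ⟨h1, h2⟩ := happrox2 e
  have hX : 0 < (w e ^ (2 / p - 1) * (σlev e + z e)) ^ (p / 2) :=
    Real.rpow_pos_of_pos (mul_pos hwα hs) _
  have key1 : Real.exp (-(εσ * (p / 2))) * ((w e ^ (2 / p - 1) * (σlev e + z e)) ^ (p / 2))
      ≤ (w e ^ (2 / p - 1) * σbar e) ^ (p / 2) := by
    have hrw : Real.exp (-(εσ * (p / 2))) = (Real.exp (-εσ)) ^ (p / 2) := by
      rw [← Real.exp_mul]; ring_nf
    rw [hrw, ← Real.mul_rpow (Real.exp_pos _).le (mul_pos hwα hs).le]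
    refine Real.rpow_le_rpow (by positivity) ?_ hhalf
    calc Real.exp (-εσ) * (w e ^ (2 / p - 1) * (σlev e + z e))
        = w e ^ (2 / p - 1) * (Real.exp (-εσ) * (σlev e + z e)) := by ring
      _ ≤ w e ^ (2 / p - 1) * σbar e := mul_le_mul_of_nonneg_left h1 hwα.le
  have key2 : (w e ^ (2 / p - 1) * σbar e) ^ (p / 2)
      ≤ Real.exp (εσ * (p / 2)) * ((w e ^ (2 / p - 1) * (σlev e + z e)) ^ (p / 2)) := by
    have hrw : Real.exp (εσ * (p / 2)) = (Real.exp εσ) ^ (p / 2) := Real.exp_mul _ _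
    rw [hrw, ← Real.mul_rpow (Real.exp_pos _).le (mul_pos hwα hs).le]
    refine Real.rpow_le_rpow (mul_pos hwα (hσbar e)).le ?_ hhalf
    calc w e ^ (2 / p - 1) * σbar e
        ≤ w e ^ (2 / p - 1) * (Real.exp εσ * (σlev e + z e)) :=
          mul_le_mul_of_nonneg_left h2 hwα.le
      _ = Real.exp εσ * (w e ^ (2 / p - 1) * (σlev e + z e)) := by ring
  constructor
  · calc Real.exp (-((ε + εσ) * |1 - p / 2| + εσ * (p / 2)))
          * ((w e ^ (2 / p - 1) * (σlev e + z e)) ^ (p / 2))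
        ≤ Real.exp (-(εσ * (p / 2)))
          * ((w e ^ (2 / p - 1) * (σlev e + z e)) ^ (p / 2)) := by
          apply mul_le_mul_of_nonneg_right _ hX.le
          apply Real.exp_le_exp.2; linarith
      _ ≤ _ := key1
  · calc (w e ^ (2 / p - 1) * σbar e) ^ (p / 2)
        ≤ Real.exp (εσ * (p / 2))
          * ((w e ^ (2 / p - 1) * (σlev e + z e)) ^ (p / 2)) := key2
      _ ≤ _ := by
          apply mul_le_mul_of_nonneg_right _ hX.le
          apply Real.exp_le_exp.2; linarith
end
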